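/- Fix an integer N ≥ 1, pairwise distinct complex numbers u_1, …, u_N, complex numbers x, y with x ∉ {u_1,…,u_N} and y ∉ {u_1,…,u_N} ∪ {x}, and an integer s ≥ 1. Then ∑_{k=1}^{N} 1/((u_k − y)^s·(x − u_k)·∏_{α ≠ k}(u_k − u_α)) = 1/((x − y)^s·∏_{α=1}^{N}(x − u_α)) − (1/(s−1)!)·(d^{s−1}/dy^{s−1})[ 1/((x − y)·∏_{α=1}^{N}(y − u_α)) ]. -/

import Mathlib

/-!
Partial fractions: with the Lagrange nodal weights `c k = ∏_{α ≠ k} (u k - u α)⁻¹`, the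
barycentric identity `∑ k, c k / (z - u k) = 1 / ∏ α, (z - u α)`, used at `z = w` and at `z = x`,
gives
`1 / ((x - w) ∏ α, (w - u α)) = 1 / ((x - w) ∏ α, (x - u α)) + ∑ k, c k / ((x - u k) (w - u k))`
away from the poles. Differentiating `s - 1` times at `y`, the first term yields the first term
of the right-hand side and the `k`-th term yields `-(s - 1)! c k / ((x - u k) (u k - y) ^ s)`.
-/

open Finset Polynomial Lagrange Filter Topology
open scoped Nat

namespace Lagrange

variable {F ι : Type*} [Field F] [DecidableEq ι] {s : Finset ι} {v : ι → F} {x w : F}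

theorem sum_nodalWeight_mul_inv_sub (hvs : Set.InjOn v s) (hs : s.Nonempty)
    (hx : ∀ i ∈ s, x ≠ v i) :
    ∑ i ∈ s, nodalWeight s v i * (x - v i)⁻¹ = (∏ i ∈ s, (x - v i))⁻¹ := by
  have h := eval_interpolate_not_at_node (1 : ι → F) hx
  simp only [interpolate_one hvs hs, eval_one, eval_nodal, Pi.one_apply, mul_one] at h
  exact eq_inv_of_mul_eq_one_right h.symm

theorem inv_sub_mul_prod_sub_eq (hvs : Set.InjOn v s) (hs : s.Nonempty)
    (hx : ∀ i ∈ s, x ≠ v i) (hw : ∀ i ∈ s, w ≠ v i) (hwx : w ≠ x) :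
    ((x - w) * ∏ i ∈ s, (w - v i))⁻¹ =
      (∏ i ∈ s, (x - v i))⁻¹ * (x - w)⁻¹ +
        ∑ i ∈ s, nodalWeight s v i * (x - v i)⁻¹ * (w - v i)⁻¹ := by
  have hsplit : ∀ i ∈ s, (x - w)⁻¹ * (w - v i)⁻¹ = (x - v i)⁻¹ * ((x - w)⁻¹ + (w - v i)⁻¹) := by
    intro i hi
    have := sub_ne_zero.2 (hx i hi)
    have := sub_ne_zero.2 (hw i hi)
    have := sub_ne_zero.2 hwx.symm
    field_simp
    ring
  calc ((x - w) * ∏ i ∈ s, (w - v i))⁻¹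
      = ∑ i ∈ s, nodalWeight s v i * ((x - w)⁻¹ * (w - v i)⁻¹) := by
        rw [mul_inv, ← sum_nodalWeight_mul_inv_sub hvs hs hw, mul_sum]
        exact sum_congr rfl fun i _ => by ring
    _ = (∑ i ∈ s, nodalWeight s v i * (x - v i)⁻¹) * (x - w)⁻¹ +
          ∑ i ∈ s, nodalWeight s v i * (x - v i)⁻¹ * (w - v i)⁻¹ := by
        rw [sum_mul, ← sum_add_distrib]
        exact sum_congr rfl fun i hi => by rw [hsplit i hi]; ring
    _ = _ := by rw [sum_nodalWeight_mul_inv_sub hvs hs hx]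

end Lagrange

variable {𝕜 : Type*} [NontriviallyNormedField 𝕜]

theorem iteratedDeriv_inv_const_sub (m : ℕ) (a w : 𝕜) :
    iteratedDeriv m (fun z => (a - z)⁻¹) w = m ! * ((a - w) ^ (m + 1))⁻¹ := by
  have h := congrFun (iter_deriv_inv_linear m (-1 : 𝕜) a) w
  simp only [neg_one_mul, neg_add_eq_sub] at h
  rw [iteratedDeriv_eq_iterate, h, show (-1 - m : ℤ) = -((m + 1 : ℕ) : ℤ) by push_cast; ring,
    zpow_neg, zpow_natCast]
  have hsign : (-1 : 𝕜) ^ m * (-1) ^ m = 1 := by rw [← pow_add, Even.neg_one_pow ⟨m, rfl⟩]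
  linear_combination (m ! * ((a - w) ^ (m + 1))⁻¹) * hsign

theorem iteratedDeriv_inv_sub_const (m : ℕ) (a w : 𝕜) :
    iteratedDeriv m (fun z => (z - a)⁻¹) w = -(m ! * ((a - w) ^ (m + 1))⁻¹) := by
  simp only [← neg_sub a, inv_neg, iteratedDeriv_fun_neg, iteratedDeriv_inv_const_sub]

theorem iteratedDeriv_inv_sub_mul_prod_sub {ι : Type*} [DecidableEq ι] {s : Finset ι}
    {v : ι → 𝕜} {x w : 𝕜} (hvs : Set.InjOn v s) (hs : s.Nonempty)
    (hx : ∀ i ∈ s, x ≠ v i) (hw : ∀ i ∈ s, w ≠ v i) (hwx : w ≠ x) (m : ℕ) :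
    iteratedDeriv m (fun z => ((x - z) * ∏ i ∈ s, (z - v i))⁻¹) w =
      m ! * ((∏ i ∈ s, (x - v i))⁻¹ * ((x - w) ^ (m + 1))⁻¹ -
        ∑ i ∈ s, nodalWeight s v i * (x - v i)⁻¹ * ((v i - w) ^ (m + 1))⁻¹) := by
  have hnear : (fun z => ((x - z) * ∏ i ∈ s, (z - v i))⁻¹) =ᶠ[𝓝 w] fun z =>
      (∏ i ∈ s, (x - v i))⁻¹ * (x - z)⁻¹ +
        ∑ i ∈ s, nodalWeight s v i * (x - v i)⁻¹ * (z - v i)⁻¹ := by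
    filter_upwards [eventually_ne_nhds hwx,
      (eventually_all_finset s).2 fun i hi => eventually_ne_nhds (hw i hi)] with z hzx hz
    exact inv_sub_mul_prod_sub_eq hvs hs hx hz hzx
  have hsmooth : ∀ a, w ≠ a → ContDiffAt 𝕜 m (fun z => (z - a)⁻¹) w := fun a ha =>
    (contDiffAt_id.sub contDiffAt_const).inv (sub_ne_zero.2 ha)
  have hsmooth' : ∀ a, w ≠ a → ContDiffAt 𝕜 m (fun z => (a - z)⁻¹) w := fun a ha =>
    (contDiffAt_const.sub contDiffAt_id).inv (sub_ne_zero.2 ha.symm)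
  rw [(hnear.iteratedDeriv m).eq_of_nhds, iteratedDeriv_fun_add, iteratedDeriv_const_mul_field,
    iteratedDeriv_fun_sum]
  · simp only [iteratedDeriv_const_mul_field, iteratedDeriv_inv_sub_const,
      iteratedDeriv_inv_const_sub, mul_neg, sum_neg_distrib, ← sub_eq_add_neg, mul_sub, mul_sum]
    congr 1
    · ring
    · exact sum_congr rfl fun i _ => by ring
  · exact fun i hi => contDiffAt_const.mul (hsmooth _ (hw i hi))
  · exact contDiffAt_const.mul (hsmooth' x hwx)
  · exact .sum fun i hi => contDiffAt_const.mul (hsmooth _ (hw i hi))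

theorem stmt14 (N : ℕ) (hN : 1 ≤ N) (u : Fin N → ℂ) (hu : Function.Injective u)
    (x y : ℂ) (hx : ∀ k, x ≠ u k) (hy : ∀ k, y ≠ u k) (hxy : y ≠ x)
    (s : ℕ) (hs : 1 ≤ s) :
    ∑ k : Fin N,
        1 / ((u k - y) ^ s * (x - u k) * ∏ α ∈ univ.erase k, (u k - u α)) =
      1 / ((x - y) ^ s * ∏ α : Fin N, (x - u α)) -
        (1 / (Nat.factorial (s - 1) : ℂ)) *
          iteratedDeriv (s - 1)
            (fun w => 1 / ((x - w) * ∏ α : Fin N, (w - u α))) y := by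
  obtain ⟨m, rfl⟩ : ∃ m, s = m + 1 := ⟨s - 1, by omega⟩
  have hnodes : (univ : Finset (Fin N)).Nonempty := univ_nonempty_iff.2 ⟨⟨0, hN⟩⟩
  simp only [one_div, Nat.add_sub_cancel]
  rw [iteratedDeriv_inv_sub_mul_prod_sub hu.injOn hnodes (fun k _ => hx k) (fun k _ => hy k) hxy,
    inv_mul_cancel_left₀ (Nat.cast_ne_zero.2 m.factorial_ne_zero), mul_inv, mul_comm,
    sub_sub_cancel]
  refine sum_congr rfl fun k _ => ?_
  rw [nodalWeight, prod_inv_distrib, mul_inv, mul_inv]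
  ring
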